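/- Let θ be an n-cycle in S_n, θ* its doubling, ρ_s = (2s−1, 2s), and η = θ* ∘ ρ_{i_1} ∘ ⋯ ∘ ρ_{i_m} with distinct indices i_1 < ⋯ < i_m. If m is odd, then η is a 2n-cycle in S_{2n}; if m is even, then η is not a 2n-cycle. -/

import Mathlib

/-!
Via `pairEquiv`, `η = θ* ∘ ρ_{i_1} ∘ ⋯ ∘ ρ_{i_m}` acts on `Fin n × ℤ/2` as the skew product
`(k, q) ↦ (θ k, q + [k ∈ {i_1, …, i_m}])`. Since `θ` is an `n`-cycle, `η^n` carries every `(k, q)`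
once around the cycle, so `η^n (k, q) = (k, q + m)`. For odd `m`, `η^n` swaps the two points over
each `k`, and the `η`-orbit of any point meets both of them; for even `m`, `η^n = 1`, so every
`η`-orbit has at most `n < 2n` points.
-/

/-- `σ` is a single cycle through all of `Fin N` (an `N`-cycle). -/
def IsFullCycle {N : ℕ} (σ : Equiv.Perm (Fin N)) : Prop :=
  ∃ x : Fin N, ∀ y : Fin N, ∃ k : ℕ, (σ ^ k) x = y

/-- The equivalence packing a pair `(k, p)` as `2k + p`, so that (in 1-based terms)
the pair `{2k-1, 2k}` corresponds to `k`. -/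
def pairEquiv (n : ℕ) : Fin n × Fin 2 ≃ Fin (2 * n) where
  toFun p := ⟨2 * p.1.1 + p.2.1, by have := p.1.isLt; have := p.2.isLt; omega⟩
  invFun j := (⟨j.1 / 2, by have := j.isLt; omega⟩, ⟨j.1 % 2, by omega⟩)
  left_inv p := by
    obtain ⟨⟨a, ha⟩, ⟨b, hb⟩⟩ := p
    refine Prod.ext (Fin.ext ?_) (Fin.ext ?_) <;> simp <;> omega
  right_inv j := by
    apply Fin.ext; simp; omega

/-- The doubling `θ*` of a permutation `θ` of `{1,…,n}`: in 1-based terms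
`θ*(2k) = 2θ(k)` and `θ*(2k-1) = 2θ(k)-1`. -/
def doublePerm {n : ℕ} (θ : Equiv.Perm (Fin n)) : Equiv.Perm (Fin (2 * n)) :=
  (pairEquiv n).permCongr (θ.prodCongr (Equiv.refl (Fin 2)))

/-- The transposition `ρ_s = (2s-1, 2s)` (1-based), i.e. swapping `2s` and `2s+1` (0-based). -/
def rho {n : ℕ} (s : Fin n) : Equiv.Perm (Fin (2 * n)) :=
  Equiv.swap ⟨2 * s.1, by have := s.isLt; omega⟩ ⟨2 * s.1 + 1, by have := s.isLt; omega⟩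

lemma rho_comm {n : ℕ} (s t : Fin n) : Commute (rho s) (rho t) := by
  rcases eq_or_ne s t with rfl | hst
  · exact Commute.refl _
  · have h : s.1 ≠ t.1 := fun h => hst (Fin.ext h)
    apply Equiv.Perm.Disjoint.commute
    intro x
    by_cases hx : x.1 = 2 * s.1 ∨ x.1 = 2 * s.1 + 1
    · right
      exact Equiv.swap_apply_of_ne_of_ne (Fin.ne_of_val_ne (by simp; omega))
        (Fin.ne_of_val_ne (by simp; omega))
    · left
      push_neg at hx
      exact Equiv.swap_apply_of_ne_of_ne (Fin.ne_of_val_ne (by simpa using hx.1))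
        (Fin.ne_of_val_ne (by simpa using hx.2))

open Function

namespace IsFullCycle

variable {N : ℕ} {σ : Equiv.Perm (Fin N)}

theorem exists_pow_apply_eq (hσ : IsFullCycle σ) (z y : Fin N) : ∃ k : ℕ, (σ ^ k) z = y := by
  obtain ⟨x, hx⟩ := hσ
  obtain ⟨a, rfl⟩ := hx z
  obtain ⟨b, rfl⟩ := hx y
  exact (Equiv.Perm.sameCycle_pow_left.2 ⟨b, by rw [zpow_natCast]⟩).exists_nat_pow_eq

theorem minimalPeriod_eq (hσ : IsFullCycle σ) (z : Fin N) : minimalPeriod σ z = N := by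
  refine le_antisymm (by simpa using minimalPeriod_le_card (f := σ) (x := z)) ?_
  have hpos : 0 < minimalPeriod σ z :=
    minimalPeriod_pos_of_mem_periodicPts (σ.injective.mem_periodicPts z)
  have hsurj : Surjective fun t : Fin (minimalPeriod σ z) => σ^[t] z := fun y => by
    obtain ⟨k, rfl⟩ := hσ.exists_pow_apply_eq z y
    refine ⟨⟨k % _, Nat.mod_lt k hpos⟩, ?_⟩
    simp [iterate_mod_minimalPeriod_eq, Equiv.Perm.iterate_eq_pow]
  simpa using Fintype.card_le_of_surjective _ hsurj

theorem pow_card_eq_one (hσ : IsFullCycle σ) : σ ^ N = 1 := Equiv.ext fun z => by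
  simpa [← Equiv.Perm.iterate_eq_pow, hσ.minimalPeriod_eq z] using
    iterate_minimalPeriod (f := σ) (x := z)

theorem card_le_of_pow_eq_one (hσ : IsFullCycle σ) {m : ℕ} (hm : 0 < m) (h : σ ^ m = 1)
    (z : Fin N) : N ≤ m := by
  rw [← hσ.minimalPeriod_eq z]
  refine IsPeriodicPt.minimalPeriod_le hm ?_
  simp [IsPeriodicPt, IsFixedPt, Equiv.Perm.iterate_eq_pow, h]

theorem bijective_pow_apply (hσ : IsFullCycle σ) (z : Fin N) :
    Bijective fun t : Fin N => (σ ^ (t : ℕ)) z := by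
  refine Finite.injective_iff_bijective.1 fun s t hst => Fin.ext ?_
  have := iterate_injOn_Iio_minimalPeriod (f := σ) (x := z)
  rw [hσ.minimalPeriod_eq z] at this
  exact this s.isLt t.isLt (by simpa [Equiv.Perm.iterate_eq_pow] using hst)

end IsFullCycle

open Fin.CommRing

section

variable {n : ℕ}

theorem doublePerm_pairEquiv (θ : Equiv.Perm (Fin n)) (k : Fin n) (q : Fin 2) :
    doublePerm θ (pairEquiv n (k, q)) = pairEquiv n (θ k, q) := by
  simp [doublePerm, Equiv.permCongr_apply]

theorem rho_pairEquiv (s k : Fin n) (q : Fin 2) :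
    rho s (pairEquiv n (k, q)) = pairEquiv n (k, q + if k = s then 1 else 0) := by
  rw [rho, Equiv.swap_apply_def]
  fin_cases q <;> split_ifs <;> simp_all [pairEquiv, Fin.ext_iff] <;> omega

theorem prod_map_rho_pairEquiv {l : List (Fin n)} (hl : l.Nodup) (k : Fin n) (q : Fin 2) :
    (l.map rho).prod (pairEquiv n (k, q)) = pairEquiv n (k, q + if k ∈ l then 1 else 0) := by
  induction l with
  | nil => simp
  | cons s l ih =>
    obtain ⟨hs, hl⟩ := List.nodup_cons.1 hl
    rw [List.map_cons, List.prod_cons, Equiv.Perm.mul_apply, ih hl, rho_pairEquiv, add_assoc]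
    congr 3
    by_cases hks : k = s
    · subst hks; simp [hs]
    · simp [hks]

theorem doublePerm_mul_pow_pairEquiv (θ : Equiv.Perm (Fin n)) {l : List (Fin n)}
    (hl : l.Nodup) (j : ℕ) (k : Fin n) (q : Fin 2) :
    ((doublePerm θ * (l.map rho).prod) ^ j) (pairEquiv n (k, q)) =
      pairEquiv n ((θ ^ j) k, q + ∑ t ∈ Finset.range j, if (θ ^ t) k ∈ l then 1 else 0) := by
  induction j with
  | zero => simp
  | succ j ih =>
    rw [pow_succ', Equiv.Perm.mul_apply, ih, Equiv.Perm.mul_apply, prod_map_rho_pairEquiv hl,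
      doublePerm_pairEquiv, Finset.sum_range_succ, add_assoc, pow_succ', Equiv.Perm.mul_apply]

theorem IsFullCycle.doublePerm_mul_pow_card_pairEquiv {θ : Equiv.Perm (Fin n)}
    (hθ : IsFullCycle θ) {l : List (Fin n)} (hl : l.Nodup) (k : Fin n) (q : Fin 2) :
    ((doublePerm θ * (l.map rho).prod) ^ n) (pairEquiv n (k, q)) =
      pairEquiv n (k, q + l.length) := by
  classical
  rw [doublePerm_mul_pow_pairEquiv θ hl, hθ.pow_card_eq_one,
    Finset.sum_range fun t => if (θ ^ t) k ∈ l then (1 : Fin 2) else 0,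
    Fintype.sum_bijective _ (hθ.bijective_pow_apply k) _ (fun y => if y ∈ l then 1 else 0)
      fun _ => rfl, Finset.sum_boole]
  rw [← List.toFinset_card_of_nodup hl]
  simp [← List.mem_toFinset]

theorem IsFullCycle.isFullCycle_doublePerm_mul_of_odd {θ : Equiv.Perm (Fin n)}
    (hθ : IsFullCycle θ) {l : List (Fin n)} (hl : l.Nodup) (hodd : Odd l.length) :
    IsFullCycle (doublePerm θ * (l.map rho).prod) := by
  have hswap : (l.length : Fin 2) = 1 := by
    rw [Fin.ext_iff, Fin.val_natCast]
    simpa [Nat.odd_iff] using hodd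
  obtain ⟨x, -⟩ := id hθ
  refine ⟨pairEquiv n (x, 0), fun y => ?_⟩
  obtain ⟨⟨k, q⟩, rfl⟩ := (pairEquiv n).surjective y
  obtain ⟨t, rfl⟩ := hθ.exists_pow_apply_eq x k
  have hstep := doublePerm_mul_pow_pairEquiv θ hl t x 0
  set c := (0 : Fin 2) + ∑ s ∈ Finset.range t, if (θ ^ s) x ∈ l then 1 else 0
  by_cases hc : c = q
  · exact ⟨t, by rw [hstep, hc]⟩
  · -- `η^n` moves `(θ^t x, c)` to the other point `(θ^t x, c + 1)` over `θ^t x`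
    refine ⟨n + t, ?_⟩
    rw [pow_add, Equiv.Perm.mul_apply, hstep, hθ.doublePerm_mul_pow_card_pairEquiv hl, hswap]
    congr 2
    omega

theorem IsFullCycle.not_isFullCycle_doublePerm_mul_of_even {θ : Equiv.Perm (Fin n)}
    (hθ : IsFullCycle θ) {l : List (Fin n)} (hl : l.Nodup) (heven : Even l.length) :
    ¬ IsFullCycle (doublePerm θ * (l.map rho).prod) := by
  intro hfull
  have hfix : (doublePerm θ * (l.map rho).prod) ^ n = 1 := Equiv.ext fun y => by
    obtain ⟨⟨k, q⟩, rfl⟩ := (pairEquiv n).surjective y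
    have : (l.length : Fin 2) = 0 := by simpa [Fin.natCast_eq_zero] using heven.two_dvd
    rw [hθ.doublePerm_mul_pow_card_pairEquiv hl, this, add_zero, Equiv.Perm.one_apply]
  obtain ⟨x, -⟩ := hθ
  have hn : 0 < n := x.pos
  have := hfull.card_le_of_pow_eq_one hn hfix (pairEquiv n (x, 0))
  omega

end

/-- Let `θ` be an `n`-cycle and `η = θ* ∘ ρ_{i_1} ∘ ⋯ ∘ ρ_{i_m}` with distinct indices.
If `m` is odd then `η` is a `2n`-cycle; if `m` is even then `η` is not a `2n`-cycle. -/
theorem doubling_isCycle_iff_odd {n : ℕ} (θ : Equiv.Perm (Fin n)) (hθ : IsFullCycle θ)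
    (l : List (Fin n)) (hl : l.Pairwise (· < ·)) :
    (Odd l.length → IsFullCycle (doublePerm θ * (l.map rho).prod)) ∧
    (Even l.length → ¬ IsFullCycle (doublePerm θ * (l.map rho).prod)) :=
  ⟨hθ.isFullCycle_doublePerm_mul_of_odd hl.nodup,
    hθ.not_isFullCycle_doublePerm_mul_of_even hl.nodup⟩
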